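/- arXiv:2001.07211 — 2 statements merged into one kernel-verified Lean document; each statement's English description precedes it below -/
import Mathlib

section
/- With respect to the standard symplectic form ⟨x,y⟩ = x_1 y_3 + x_2 y_4 - x_3 y_1 - x_4 y_2 on Q^4, the subspaces W_att = span{A+, A-} and W_ell = span{E+, E-} are symplectic-orthogonal complements of each other, where A+ = (16,-60,0,5), A- = (0,0,2,1), E+ = (6,-12,0,1), E- = (-1,2,-5/7,-5/14). -/
def sympl (x y : Fin 4 → ℚ) : ℚ := x 0 * y 2 + x 1 * y 3 - x 2 * y 0 - x 3 * y 1

def Aplus : Fin 4 → ℚ := ![16, -60, 0, 5]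
def Aminus : Fin 4 → ℚ := ![0, 0, 2, 1]
def Eplus : Fin 4 → ℚ := ![6, -12, 0, 1]
def Eminus : Fin 4 → ℚ := ![-1, 2, -5/7, -5/14]

def Watt : Submodule ℚ (Fin 4 → ℚ) := Submodule.span ℚ {Aplus, Aminus}
def Well : Submodule ℚ (Fin 4 → ℚ) := Submodule.span ℚ {Eplus, Eminus}

/-! Each of `Watt`, `Well` is spanned by two vectors, so its symplectic orthogonal is cut out by
two linear equations. The generators of `Well` satisfy the equations of `Watt`, and conversely every
solution is an explicit combination of `Eplus` and `Eminus`; hence `Well = Watt^⊥`. Since the form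
is alternating, `Watt ≤ Watt^⊥⊥ = Well^⊥`, and again every solution is an explicit combination of
`Aplus` and `Aminus`. In both cases the coefficients are read off the coordinates `0` and `2`. -/

namespace LinearMap.BilinForm

variable {R M : Type*} [CommSemiring R] [AddCommMonoid M] [Module R M]

theorem mem_orthogonal_span_pair_iff (B : LinearMap.BilinForm R M) {a b m : M} :
    m ∈ B.orthogonal (Submodule.span R {a, b}) ↔ B a m = 0 ∧ B b m = 0 := by
  change Submodule.span R {a, b} ≤ LinearMap.ker (B.flip m) ↔ _
  rw [Submodule.span_le, Set.insert_subset_iff, Set.singleton_subset_iff]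
  rfl

end LinearMap.BilinForm

open LinearMap.BilinForm

def symplForm : LinearMap.BilinForm ℚ (Fin 4 → ℚ) :=
  LinearMap.mk₂ ℚ sympl
    (fun _ _ _ => by simp only [sympl, Pi.add_apply]; ring)
    (fun _ _ _ => by simp only [sympl, Pi.smul_apply, smul_eq_mul]; ring)
    (fun _ _ _ => by simp only [sympl, Pi.add_apply]; ring)
    (fun _ _ _ => by simp only [sympl, Pi.smul_apply, smul_eq_mul]; ring)

@[simp]
theorem symplForm_apply (x y : Fin 4 → ℚ) : symplForm x y = sympl x y := rfl

theorem symplForm_isAlt : symplForm.IsAlt := fun x => by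
  simp only [symplForm_apply, sympl]; ring

theorem Well_eq_orthogonal_Watt : Well = symplForm.orthogonal Watt := by
  apply le_antisymm
  · rw [Well, Submodule.span_le, Set.insert_subset_iff, Set.singleton_subset_iff]
    simp only [SetLike.mem_coe, Watt, mem_orthogonal_span_pair_iff, symplForm_apply, sympl, Aplus,
      Aminus, Eplus, Eminus, Matrix.cons_val]
    norm_num
  · intro y hy
    obtain ⟨hplus, hminus⟩ := (mem_orthogonal_span_pair_iff symplForm).1 hy
    simp only [Aplus, Aminus, symplForm_apply, sympl, Matrix.cons_val] at hplus hminus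
    refine Submodule.mem_span_pair.2 ⟨(y 0 - 7 * y 2 / 5) / 6, -7 * y 2 / 5, ?_⟩
    ext i
    fin_cases i <;> simp [Eplus, Eminus] <;> linarith

theorem Watt_eq_orthogonal_Well : Watt = symplForm.orthogonal Well := by
  apply le_antisymm
  · rw [Well_eq_orthogonal_Watt]
    exact le_orthogonal_orthogonal symplForm_isAlt.isRefl
  · intro y hy
    obtain ⟨hplus, hminus⟩ := (mem_orthogonal_span_pair_iff symplForm).1 hy
    simp only [Eplus, Eminus, symplForm_apply, sympl, Matrix.cons_val] at hplus hminus
    refine Submodule.mem_span_pair.2 ⟨y 0 / 16, y 2 / 2, ?_⟩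
    ext i
    fin_cases i <;> simp [Aplus, Aminus] <;> linarith

theorem symplectic_orthogonal_complements :
    (∀ y, y ∈ Well ↔ ∀ x ∈ Watt, sympl x y = 0) ∧
    (∀ y, y ∈ Watt ↔ ∀ x ∈ Well, sympl x y = 0) :=
  ⟨fun _ => Well_eq_orthogonal_Watt ▸ Iff.rfl, fun _ => Watt_eq_orthogonal_Well ▸ Iff.rfl⟩
end

section
/- The fourth-order differential operator D = θ^4 - φ(35θ^4 + 70θ^3 + 63θ^2 + 28θ + 5) + φ^2(θ+1)^2(259θ^2 + 518θ + 285) - 225φ^3(θ+1)^2(θ+2)^2, with θ = φ d/dφ, applied to the formal power series π_0 = Σ_{n≥0} a_n φ^n with a_n = Σ_{i+j+k+l+m=n} (n!/(i!j!k!l!m!))^2, gives zero. -/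
/-!
The `n`-th coefficient of `y⁵`, where `y = Σ φⁿ / n!²` solves `θ² y = φ y`, is `aₙ / n!²`
(expand the multinomial coefficient). The coefficientwise map `bₙ ↦ n!² bₙ` commutes with `θ`
and turns multiplication by `φ` into `θ² ∘ φ`, so it carries the fifth symmetric power
`L = θ⁶ - φ (35θ⁴ + 70θ³ + 63θ² + 28θ + 5) + φ² (259θ² + 518θ + 285) - 225φ³` of `θ² - φ`
to `θ² ∘ D`. Hence `θ² (D π₀)` is the image of `L (y⁵)`, which vanishes by a computation using
only the Leibniz rule, `θ φ = φ` and `θ (θ y) = φ y`; as `D π₀` has no constant term, `D π₀ = 0`.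
-/

open PowerSeries

/-- The Euler operator θ = φ d/dφ on formal power series. -/
noncomputable def theta (f : PowerSeries ℚ) : PowerSeries ℚ :=
  PowerSeries.mk fun n => (n : ℚ) * PowerSeries.coeff n f

/-- The coefficients a_n = Σ_{i+j+k+l+m=n} (n!/(i!j!k!l!m!))². -/
noncomputable def a (n : ℕ) : ℚ :=
  ∑ x ∈ Finset.Nat.antidiagonalTuple 5 n, ((Nat.multinomial Finset.univ x : ℚ)) ^ 2

/-- The holomorphic canonical period π₀ = Σ a_n φⁿ. -/
noncomputable def pi0 : PowerSeries ℚ := PowerSeries.mk a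

/-- The Picard-Fuchs operator D applied to f. -/
noncomputable def D (f : PowerSeries ℚ) : PowerSeries ℚ :=
  theta (theta (theta (theta f)))
    - (PowerSeries.X : PowerSeries ℚ) *
        (35 • theta (theta (theta (theta f))) + 70 • theta (theta (theta f))
          + 63 • theta (theta f) + 28 • theta f + 5 • f)
    + (PowerSeries.X : PowerSeries ℚ) ^ 2 *
        ((fun g => theta (theta g) + 2 • theta g + g)  -- (θ+1)²
          (259 • theta (theta f) + 518 • theta f + 285 • f))
    - 225 • ((PowerSeries.X : PowerSeries ℚ) ^ 3 *
        ((fun g => theta (theta g) + 2 • theta g + g)  -- (θ+1)²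
          ((fun g => theta (theta g) + 4 • theta g + 4 • g)  -- (θ+2)²
            f)))

open Finset
open scoped Nat

def sym5BesselOp {R : Type*} [CommRing R] (δ : R → R) (x f : R) : R :=
  δ^[6] f - x * (35 • δ^[4] f + 70 • δ^[3] f + 63 • δ^[2] f + 28 • δ f + 5 • f)
    + x ^ 2 * (259 • δ^[2] f + 518 • δ f + 285 • f) - 225 • (x ^ 3 * f)

theorem sym5BesselOp_pow_five {A R : Type*} [CommSemiring A] [CommRing R] [Algebra A R]
    (δ : Derivation A R R) {x u : R} (hx : δ x = x) (hu : δ (δ u) = x * u) :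
    sym5BesselOp δ x (u ^ 5) = 0 := by
  simp only [sym5BesselOp, Function.iterate_succ_apply', Function.iterate_zero_apply, map_nsmul,
    map_add, Derivation.leibniz, Derivation.leibniz_pow, hx, hu, smul_eq_mul]
  ring

noncomputable def thetaDerivation : Derivation ℚ ℚ⟦X⟧ ℚ⟦X⟧ := (X : ℚ⟦X⟧) • derivative ℚ

theorem coe_thetaDerivation : ⇑thetaDerivation = theta := by
  ext f n
  rcases n with _ | n
  · simp [thetaDerivation, theta]
  · simp [thetaDerivation, theta, coeff_succ_X_mul, coeff_derivative, mul_comm]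

theorem coeff_theta (n : ℕ) (f : ℚ⟦X⟧) : coeff n (theta f) = n * coeff n f := coeff_mk _ _

theorem coeff_theta_iterate (k n : ℕ) (f : ℚ⟦X⟧) :
    coeff n (theta^[k] f) = (n : ℚ) ^ k * coeff n f := by
  induction k with
  | zero => simp
  | succ k ih => rw [Function.iterate_succ_apply', coeff_theta, ih]; ring

noncomputable def besselSeries : ℚ⟦X⟧ := mk fun n => ((n ! : ℚ) ^ 2)⁻¹

theorem theta_theta_besselSeries : theta (theta besselSeries) = X * besselSeries := by
  ext n
  rcases n with _ | n
  · simp [theta]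
  · simp [theta, besselSeries, coeff_succ_X_mul, Nat.factorial_succ]
    field_simp

theorem coeff_pow_eq_sum_antidiagonalTuple {R : Type*} [CommSemiring R] (k n : ℕ) (f : R⟦X⟧) :
    coeff n (f ^ k) = ∑ x ∈ Nat.antidiagonalTuple k n, ∏ i, coeff (x i) f := by
  classical
  rw [← Fin.prod_const, coeff_prod, finsuppAntidiag, sum_map,
    ← piAntidiag_univ_fin_eq_antidiagonalTuple]
  exact sum_attach (piAntidiag univ n) fun x => ∏ i, coeff (x i) f

theorem cast_multinomial {α : Type*} (s : Finset α) (f : α → ℕ) :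
    (Nat.multinomial s f : ℚ) = (∑ i ∈ s, f i)! * ∏ i ∈ s, ((f i)! : ℚ)⁻¹ := by
  have h : (∏ i ∈ s, ((f i)! : ℚ)) * Nat.multinomial s f = (∑ i ∈ s, f i)! := by
    exact_mod_cast Nat.multinomial_spec s f
  rw [← h, prod_inv_distrib, mul_comm, ← mul_assoc, inv_mul_cancel₀ (by positivity), one_mul]

noncomputable def hadamardFactorialSq (f : ℚ⟦X⟧) : ℚ⟦X⟧ :=
  mk fun n => (n ! : ℚ) ^ 2 * coeff n f

theorem pi0_eq_hadamardFactorialSq : pi0 = hadamardFactorialSq (besselSeries ^ 5) := by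
  ext n
  simp only [pi0, hadamardFactorialSq, coeff_mk, a, coeff_pow_eq_sum_antidiagonalTuple, mul_sum]
  refine sum_congr rfl fun x hx => ?_
  rw [Nat.mem_antidiagonalTuple] at hx
  simp [cast_multinomial, hx, besselSeries, mul_pow, prod_pow]

theorem sq_mul_coeff_D_hadamardFactorialSq (g : ℚ⟦X⟧) (n : ℕ) :
    (n : ℚ) ^ 2 * coeff n (D (hadamardFactorialSq g))
      = (n ! : ℚ) ^ 2 * coeff n (sym5BesselOp theta X g) := by
  rcases n with _ | _ | _ | m <;>
  simp only [D, sym5BesselOp, map_add, map_sub, map_nsmul, coeff_theta, coeff_theta_iterate,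
    coeff_X_pow_mul', coeff_succ_X_mul, coeff_zero_X_mul, hadamardFactorialSq, coeff_mk] <;>
  simp [Nat.factorial_succ] <;> ring

theorem coeff_zero_D (f : ℚ⟦X⟧) : coeff 0 (D f) = 0 := by
  simp only [D, map_add, map_sub, map_nsmul, coeff_theta, coeff_zero_X_mul, coeff_X_pow_mul']
  simp

theorem picard_fuchs_annihilates_pi0 : D pi0 = 0 := by
  have hL : sym5BesselOp theta X (besselSeries ^ 5) = 0 := by
    rw [← coe_thetaDerivation]
    refine sym5BesselOp_pow_five thetaDerivation (by simp [thetaDerivation]) ?_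
    rw [coe_thetaDerivation, theta_theta_besselSeries]
  ext n
  rcases n with _ | n
  · exact coeff_zero_D pi0
  · have h := sq_mul_coeff_D_hadamardFactorialSq (besselSeries ^ 5) (n + 1)
    rw [← pi0_eq_hadamardFactorialSq, hL, map_zero, mul_zero] at h
    exact (mul_eq_zero.mp h).resolve_left (by positivity)
end
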